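/- Let A be an m×m real matrix (m ≥ 1) regarded as the weighted adjacency matrix of a directed graph G on vertices {1,…,m}, where G has an edge from i to j if and only if A_{ij} ≠ 0. For every α > 0, the graph G is acyclic if and only if tr[(I + α (A ∘ A))^m] − m = 0, where A ∘ A denotes the entrywise (Hadamard) square of A and I is the m×m identity matrix. -/

import Mathlib

/-!
For an entrywise nonnegative matrix `B`, `(B ^ k) i i > 0` exactly when the support graph of `B`
has a closed walk of length `k` through `i`. By the binomial theorem
`tr (1 + α B) ^ m - m = ∑_{k=1}^{m} (m choose k) α ^ k tr (B ^ k)`, a sum of nonnegative terms,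
so it vanishes iff there is no closed walk of length between `1` and `m`; by pigeonhole, any
closed walk in a graph on `m` vertices yields one of length at most `m`. Take `B = A ∘ A`, which
has the same support as `A`.
-/

open Matrix Finset

section Walks

variable {V : Type*} (r : V → V → Prop)

theorem exists_closed_walk_of_card_lt_length [Fintype V] {k : ℕ} {v : ℕ → V}
    (hk : Fintype.card V < k) (hv : ∀ t < k, r (v t) (v (t + 1))) :
    ∃ l ∈ Icc 1 (Fintype.card V), ∃ w : ℕ → V, w l = w 0 ∧ ∀ t < l, r (w t) (w (t + 1)) := by
  obtain ⟨x, y, hxy, hne⟩ : ∃ x y : Fin (Fintype.card V + 1), v x = v y ∧ x ≠ y :=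
    Function.not_injective_iff.mp fun hinj => by
      simpa using Fintype.card_le_of_injective _ hinj
  wlog hlt : x < y generalizing x y
  · exact this y x hxy.symm hne.symm (lt_of_le_of_ne (not_lt.mp hlt) hne.symm)
  refine ⟨y - x, mem_Icc.mpr ⟨by omega, by omega⟩, fun t => v (x + t), ?_, fun t ht => ?_⟩
  · simpa [Nat.add_sub_cancel' hlt.le] using hxy.symm
  · simpa [Nat.add_assoc] using hv (x + t) (by omega)

theorem exists_closed_walk_iff_exists_closed_walk_length_le_card [Fintype V] :
    (∃ (k : ℕ) (v : ℕ → V), 1 ≤ k ∧ v k = v 0 ∧ ∀ t < k, r (v t) (v (t + 1))) ↔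
      ∃ k ∈ Icc 1 (Fintype.card V), ∃ v : ℕ → V, v k = v 0 ∧ ∀ t < k, r (v t) (v (t + 1)) := by
  constructor
  · rintro ⟨k, v, hk, hvk, hv⟩
    rcases le_or_gt k (Fintype.card V) with hkV | hkV
    · exact ⟨k, mem_Icc.mpr ⟨hk, hkV⟩, v, hvk, hv⟩
    · exact exists_closed_walk_of_card_lt_length r hkV hv
  · rintro ⟨k, hk, v, hvk, hv⟩
    exact ⟨k, v, (mem_Icc.mp hk).1, hvk, hv⟩

end Walks

namespace Matrix

variable {n R : Type*} [Fintype n] [DecidableEq n]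

theorem exists_walk_of_pow_apply_ne_zero [Semiring R] (B : Matrix n n R) {k : ℕ} {i j : n}
    (h : (B ^ k) i j ≠ 0) :
    ∃ v : ℕ → n, v 0 = i ∧ v k = j ∧ ∀ t < k, B (v t) (v (t + 1)) ≠ 0 := by
  induction k generalizing j with
  | zero =>
    obtain rfl : i = j := by by_contra hij; simp [hij] at h
    exact ⟨fun _ => i, rfl, rfl, by simp⟩
  | succ k ih =>
    rw [pow_succ, mul_apply] at h
    obtain ⟨l, -, hl⟩ := exists_ne_zero_of_sum_ne_zero h
    obtain ⟨v, hv0, hvk, hv⟩ := ih (left_ne_zero_of_mul hl)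
    refine ⟨Function.update v (k + 1) j, by simp [hv0], by simp, fun t ht => ?_⟩
    rcases Nat.lt_succ_iff_lt_or_eq.mp ht with ht | rfl
    · simpa [Function.update_of_ne (by omega : t ≠ k + 1),
        Function.update_of_ne (by omega : t + 1 ≠ k + 1)] using hv t ht
    · simpa [hvk] using right_ne_zero_of_mul hl

theorem trace_one_add_smul_pow [CommSemiring R] (B : Matrix n n R) (c : R) (m : ℕ) :
    trace ((1 + c • B) ^ m) =
      Fintype.card n + ∑ k ∈ Icc 1 m, (m.choose k : R) * c ^ k * trace (B ^ k) := by
  rw [add_comm, (Commute.one_right _).add_pow, trace_sum, sum_range_eq_add_Ico _ m.add_one_pos,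
    Ico_add_one_right_eq_Icc]
  congr 1
  · simp
  · refine sum_congr rfl fun k _ => ?_
    rw [one_pow, mul_one, smul_pow, ← nsmul_eq_mul', trace_smul, trace_smul, smul_eq_mul,
      nsmul_eq_mul, mul_assoc]

section Ordered

variable [Semiring R] [LinearOrder R] [IsStrictOrderedRing R]

theorem pow_apply_pos_of_walk {B : Matrix n n R} (hB : ∀ i j, 0 ≤ B i j) {k : ℕ} {v : ℕ → n}
    (hv : ∀ t < k, B (v t) (v (t + 1)) ≠ 0) : 0 < (B ^ k) (v 0) (v k) := by
  induction k with
  | zero => simp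
  | succ k ih =>
    rw [pow_succ, mul_apply]
    refine sum_pos' (fun l _ => mul_nonneg (pow_apply_nonneg hB k _ _) (hB _ _))
      ⟨v k, mem_univ _, mul_pos (ih fun t ht => hv t (by omega)) ?_⟩
    exact (hB _ _).lt_of_ne (hv k k.lt_succ_self).symm

theorem trace_pow_nonneg {B : Matrix n n R} (hB : ∀ i j, 0 ≤ B i j) (k : ℕ) :
    0 ≤ trace (B ^ k) :=
  sum_nonneg fun i _ => pow_apply_nonneg hB k i i

theorem trace_pow_pos_iff_exists_closed_walk {B : Matrix n n R} (hB : ∀ i j, 0 ≤ B i j)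
    (k : ℕ) :
    0 < trace (B ^ k) ↔ ∃ v : ℕ → n, v k = v 0 ∧ ∀ t < k, B (v t) (v (t + 1)) ≠ 0 := by
  constructor
  · intro h
    obtain ⟨i, -, hi⟩ := exists_ne_zero_of_sum_ne_zero h.ne'
    obtain ⟨v, hv0, hvk, hv⟩ := exists_walk_of_pow_apply_ne_zero B hi
    exact ⟨v, hvk.trans hv0.symm, hv⟩
  · rintro ⟨v, hvk, hv⟩
    have := pow_apply_pos_of_walk hB hv
    rw [hvk] at this
    exact sum_pos' (fun i _ => pow_apply_nonneg hB k i i) ⟨v 0, mem_univ _, this⟩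

end Ordered

theorem trace_one_add_smul_pow_card_eq_card_iff [CommSemiring R] [LinearOrder R]
    [IsStrictOrderedRing R] {B : Matrix n n R} (hB : ∀ i j, 0 ≤ B i j)
    {c : R} (hc : 0 < c) :
    trace ((1 + c • B) ^ Fintype.card n) = (Fintype.card n : R) ↔
      ¬ ∃ (k : ℕ) (v : ℕ → n), 1 ≤ k ∧ v k = v 0 ∧ ∀ t < k, B (v t) (v (t + 1)) ≠ 0 := by
  have hcoeff : ∀ k ∈ Icc 1 (Fintype.card n), 0 < ((Fintype.card n).choose k : R) * c ^ k :=
    fun k hk => by have := Nat.choose_pos (mem_Icc.mp hk).2; positivity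
  have hterm : ∀ k ∈ Icc 1 (Fintype.card n),
      ((Fintype.card n).choose k : R) * c ^ k * trace (B ^ k) = 0 ↔
        ¬ ∃ v : ℕ → n, v k = v 0 ∧ ∀ t < k, B (v t) (v (t + 1)) ≠ 0 := fun k hk => by
    rw [← (mul_nonneg (hcoeff k hk).le (trace_pow_nonneg hB k)).not_lt_iff_eq',
      mul_pos_iff_of_pos_left (hcoeff k hk), trace_pow_pos_iff_exists_closed_walk hB]
  rw [trace_one_add_smul_pow, add_eq_left,
    sum_eq_zero_iff_of_nonneg fun k hk => mul_nonneg (hcoeff k hk).le (trace_pow_nonneg hB k),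
    forall₂_congr hterm,
    exists_closed_walk_iff_exists_closed_walk_length_le_card fun i j => B i j ≠ 0]
  simp only [not_exists, not_and]

end Matrix

theorem acyclic_iff_trace_pow_hadamard_eq_general (m : ℕ)
    (A : Matrix (Fin m) (Fin m) ℝ) (α : ℝ) (hα : 0 < α) :
    (¬ ∃ (k : ℕ) (v : ℕ → Fin m), 1 ≤ k ∧ v k = v 0 ∧
        ∀ t < k, A (v t) (v (t + 1)) ≠ 0) ↔
      Matrix.trace ((1 + α • (Matrix.hadamard A A)) ^ m) - (m : ℝ) = 0 := by
  have key := trace_one_add_smul_pow_card_eq_card_iff (B := hadamard A A)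
    (fun i j => mul_self_nonneg (A i j)) hα
  simp only [Fintype.card_fin, hadamard_apply, ne_eq, mul_self_eq_zero] at key
  rw [sub_eq_zero, key]

/-- **Theorem 1 (DAG-GNN acyclicity constraint).**
Let `A` be an `m × m` real matrix (`m ≥ 1`) regarded as the weighted adjacency matrix of
the directed graph `G` on `{1, …, m}` with an edge from `i` to `j` iff `A i j ≠ 0`.
For every `α > 0`, `G` is acyclic iff `tr[(I + α (A ∘ A))^m] - m = 0`, where `A ∘ A`
is the Hadamard (entrywise) square of `A`. -/
theorem acyclic_iff_trace_pow_hadamard_eq (m : ℕ) (hm : 1 ≤ m)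
    (A : Matrix (Fin m) (Fin m) ℝ) (α : ℝ) (hα : 0 < α) :
    (¬ ∃ (k : ℕ) (v : ℕ → Fin m), 1 ≤ k ∧ v k = v 0 ∧
        ∀ t < k, A (v t) (v (t + 1)) ≠ 0) ↔
      Matrix.trace ((1 + α • (Matrix.hadamard A A)) ^ m) - (m : ℝ) = 0 :=
  acyclic_iff_trace_pow_hadamard_eq_general m A α hα
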